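/- arXiv:2008.08361 — 4 statements merged into one kernel-verified Lean document; each statement's English description precedes it below -/
import Mathlib

section
/- For all integers d ≥ 0 and r ≥ 1, any (d+1)(r-1)+1 points in ℝ^d can be partitioned into r pairwise disjoint sets A₁, …, A_r such that the convex hulls of A₁, …, A_r have a common point. -/
/-!
Sarkaria's proof. Write `r = s + 1`, lift each point `pᵢ` to `(pᵢ, 1)` and tensor it with the
vertices `v₀, …, v_s` of a simplex in `ℝˢ` with barycentre `0`. For every `i` this gives `s + 1`
vectors `(pᵢ, 1) ⊗ vⱼ` in a space of dimension `(d + 1) s` with `0` in their convex hull, and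
there are more than `(d + 1) s` such families. By Bárány's colorful Carathéodory theorem one can
pick a colour `f i` for every `i` so that `0 = ∑ᵢ μᵢ (pᵢ, 1) ⊗ v_{f i}` is a convex combination.
Grouping by colours, `∑ⱼ yⱼ ⊗ vⱼ = 0` with `yⱼ = ∑_{f i = j} μᵢ (pᵢ, 1)`; as the only linear
relation among the `vⱼ` is `∑ⱼ vⱼ = 0`, all `yⱼ` are equal, and their common value, normalised,
lies in the convex hull of every colour class.

For colorful Carathéodory, take among all colourful selections the point `z` of their convex
hulls nearest to the origin. If `z ≠ 0`, the hull of its selection lies beyond the hyperplane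
`⟪z, ·⟫ = ‖z‖²` through `z`, so `z` is a convex combination of affinely independent selected points
on that hyperplane, of which there are at most `dim E`. The point of an unused colour can then be
replaced by one with `⟪z, ·⟫ ≤ 0`, and the new hull comes nearer to the origin than `z`.
-/

open Finset RealInnerProductSpace Module

theorem AffineIndependent.linearIndependent_of_map_eq {k V ι : Type*} [Field k]
    [AddCommGroup V] [Module k V] {v : ι → V} (hv : AffineIndependent k v) (φ : V →ₗ[k] k)
    {c : k} (hc : c ≠ 0) (hφ : ∀ i, φ (v i) = c) : LinearIndependent k v := by
  rw [linearIndependent_iff']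
  intro s w hw i hi
  have hsum : ∑ j ∈ s, w j = 0 := by
    have := congrArg φ hw
    simp only [map_sum, map_smul, hφ, smul_eq_mul, map_zero, ← Finset.sum_mul] at this
    exact (mul_eq_zero.1 this).resolve_right hc
  refine hv s w hsum ?_ i hi
  rw [s.weightedVSub_eq_weightedVSubOfPoint_of_sum_eq_zero w v hsum 0,
    weightedVSubOfPoint_apply]
  simpa using hw

theorem exists_weights_of_mem_convexHull_range {R E ι : Type*} [Field R] [LinearOrder R]
    [IsStrictOrderedRing R] [AddCommGroup E] [Module R E] [Fintype ι] {v : ι → E} {x : E}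
    (hx : x ∈ convexHull R (Set.range v)) :
    ∃ w : ι → R, (∀ i, 0 ≤ w i) ∧ ∑ i, w i = 1 ∧ ∑ i, w i • v i = x := by
  classical
  rw [convexHull_range_eq_exists_affineCombination] at hx
  obtain ⟨s, w, hw0, hw1, rfl⟩ := hx
  refine ⟨fun i => if i ∈ s then w i else 0, fun i => ?_, ?_, ?_⟩
  · by_cases hi : i ∈ s <;> simp [hi, hw0]
  · simpa [Finset.sum_ite_mem] using hw1
  · simp [s.affineCombination_eq_linear_combination v w hw1, ite_smul, Finset.sum_ite_mem]

theorem zero_mem_convexHull_range_of_sum_eq_zero {E ι : Type*} [AddCommGroup E] [Module ℝ E]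
    [Fintype ι] [Nonempty ι] {v : ι → E} (hv : ∑ i, v i = 0) :
    (0 : E) ∈ convexHull ℝ (Set.range v) := by
  refine mem_convexHull_of_exists_fintype (fun _ => (Fintype.card ι : ℝ)⁻¹) v
    (fun _ => by positivity) ?_ Set.mem_range_self (by rw [← smul_sum, hv, smul_zero])
  simp

theorem exists_mem_le_zero_of_zero_mem_convexHull {E : Type*} [AddCommGroup E] [Module ℝ E]
    {f : E → ℝ} (hf : IsLinearMap ℝ f) {s : Set E} (h0 : 0 ∈ convexHull ℝ s) :
    ∃ x ∈ s, f x ≤ 0 := by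
  by_contra! h
  have h0' : (0 : ℝ) < f 0 := convexHull_min h (convex_halfSpace_gt hf 0) h0
  simp [hf.map_zero] at h0'

section InnerProductSpace

variable {E : Type*} [NormedAddCommGroup E] [InnerProductSpace ℝ E]

theorem IsMinOn.norm_sq_le_inner {K : Set E} {z : E} (hmin : IsMinOn (‖·‖) K z)
    (hK : Convex ℝ K) (hz : z ∈ K) {w : E} (hw : w ∈ K) : ‖z‖ ^ 2 ≤ ⟪z, w⟫ := by
  have : Nonempty K := ⟨⟨z, hz⟩⟩
  have hinf : ‖0 - z‖ = ⨅ w : K, ‖0 - (w : E)‖ := by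
    simp only [zero_sub, norm_neg]
    have hbdd : BddBelow (Set.range fun w : K => ‖(w : E)‖) :=
      ⟨0, by rintro _ ⟨w, rfl⟩; exact norm_nonneg _⟩
    exact le_antisymm (le_ciInf fun w => hmin w.2) (ciInf_le hbdd ⟨z, hz⟩)
  have := (norm_eq_iInf_iff_real_inner_le_zero hK hz).1 hinf w hw
  rw [zero_sub, inner_neg_left, inner_sub_right, real_inner_self_eq_norm_sq] at this
  linarith

theorem exists_norm_lt_of_inner_nonpos {K : Set E} (hK : Convex ℝ K) {z x : E} (hz : z ∈ K)
    (hz0 : z ≠ 0) (hx : x ∈ K) (hzx : ⟪z, x⟫ ≤ 0) : ∃ u ∈ K, ‖u‖ < ‖z‖ := by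
  by_contra! h
  have := IsMinOn.norm_sq_le_inner (fun u hu => h u hu) hK hz hx
  exact hz0 (norm_eq_zero.1 (by nlinarith [norm_nonneg z]))

variable [FiniteDimensional ℝ E]

theorem IsMinOn.exists_mem_convexHull_image_compl {ι : Type*} [Fintype ι]
    (hcard : finrank ℝ E < Fintype.card ι) {g : ι → E} {z : E}
    (hmin : IsMinOn (‖·‖) (convexHull ℝ (Set.range g)) z)
    (hz : z ∈ convexHull ℝ (Set.range g)) (hz0 : z ≠ 0) :
    ∃ k, z ∈ convexHull ℝ (g '' {k}ᶜ) := by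
  obtain ⟨κ, _, v, w, hvg, hv, hw0, hw1, hwz⟩ := eq_pos_convex_span_of_mem_convexHull hz
  have hv_le (j : κ) : ‖z‖ ^ 2 ≤ ⟪z, v j⟫ :=
    hmin.norm_sq_le_inner (convex_convexHull ℝ _) hz (subset_convexHull ℝ _ (hvg ⟨j, rfl⟩))
  have hv_eq (j : κ) : ⟪z, v j⟫ = ‖z‖ ^ 2 := by
    have hsum : ∑ j, w j * (⟪z, v j⟫ - ‖z‖ ^ 2) = 0 := by
      simp only [mul_sub, sum_sub_distrib, ← sum_mul, hw1, one_mul, ← real_inner_smul_right,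
        ← inner_sum, hwz, real_inner_self_eq_norm_sq, sub_self]
    have := (sum_eq_zero_iff_of_nonneg fun j _ =>
      mul_nonneg (hw0 j).le (sub_nonneg.2 (hv_le j))).1 hsum j (mem_univ j)
    linarith [(mul_eq_zero.1 this).resolve_left (hw0 j).ne']
  have hκ : Fintype.card κ < Fintype.card ι :=
    ((hv.linearIndependent_of_map_eq (innerₛₗ ℝ z) (by positivity) hv_eq
      ).fintype_card_le_finrank).trans_lt hcard
  choose σ hσ using fun j => hvg ⟨j, rfl⟩
  obtain ⟨k, hk⟩ : ∃ k, k ∉ Set.range σ := by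
    by_contra! h
    exact (Fintype.card_le_of_surjective σ h).not_gt hκ
  refine ⟨k, hwz ▸ (convex_convexHull ℝ _).sum_mem (fun j _ => (hw0 j).le) hw1 fun j _ => ?_⟩
  exact subset_convexHull ℝ _ ⟨σ j, fun h => hk ⟨j, h⟩, hσ j⟩

theorem colorful_caratheodory_s1 {ι : Type*} [Fintype ι] {κ : ι → Type*} [∀ i, Finite (κ i)]
    (hcard : finrank ℝ E < Fintype.card ι) (x : ∀ i, κ i → E)
    (hx : ∀ i, (0 : E) ∈ convexHull ℝ (Set.range (x i))) :
    ∃ f : ∀ i, κ i, (0 : E) ∈ convexHull ℝ (Set.range fun i => x i (f i)) := by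
  classical
  have : ∀ i, Nonempty (κ i) := fun i => by
    by_contra h
    have : IsEmpty (κ i) := not_nonempty_iff.1 h
    simpa [Set.range_eq_empty] using hx i
  have : Nonempty ι := Fintype.card_pos_iff.1 (by omega)
  let K := ⋃ f : ∀ i, κ i, convexHull ℝ (Set.range fun i => x i (f i))
  have hK : IsCompact K :=
    isCompact_iUnion fun f => (Set.finite_range _).isCompact_convexHull (𝕜 := ℝ)
  have hKne : K.Nonempty := by
    let f : ∀ i, κ i := fun i => Classical.arbitrary _
    obtain ⟨i⟩ := ‹Nonempty ι›
    exact ⟨x i (f i), Set.mem_iUnion.2 ⟨f, subset_convexHull ℝ _ ⟨i, rfl⟩⟩⟩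
  obtain ⟨z, hzK, hzmin⟩ := hK.exists_isMinOn hKne continuous_norm.continuousOn
  obtain ⟨f, hzf⟩ := Set.mem_iUnion.1 hzK
  refine ⟨f, ?_⟩
  by_contra hf
  have hz0 : z ≠ 0 := by rintro rfl; exact hf hzf
  obtain ⟨k, hk⟩ := (hzmin.on_subset (Set.subset_iUnion_of_subset f le_rfl)
    ).exists_mem_convexHull_image_compl hcard hzf hz0
  obtain ⟨_, ⟨c, rfl⟩, hc⟩ :=
    exists_mem_le_zero_of_zero_mem_convexHull (innerₛₗ ℝ z).isLinear (hx k)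
  let f' := Function.update f k c
  have hz' : z ∈ convexHull ℝ (Set.range fun i => x i (f' i)) := by
    refine convexHull_mono ?_ hk
    rintro _ ⟨i, hi, rfl⟩
    exact ⟨i, by simp [f', Function.update_of_ne (Set.mem_compl_singleton_iff.1 hi)]⟩
  have hc' : x k c ∈ convexHull ℝ (Set.range fun i => x i (f' i)) :=
    subset_convexHull ℝ _ ⟨k, by simp [f']⟩
  obtain ⟨u, hu, hlt⟩ := exists_norm_lt_of_inner_nonpos (convex_convexHull ℝ _) hz' hz0 hc' hc
  exact hlt.not_ge (hzmin (Set.mem_iUnion.2 ⟨f', hu⟩))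

end InnerProductSpace

def centeredSimplex (s : ℕ) : Fin (s + 1) → Fin s → ℝ :=
  Fin.snoc (α := fun _ => Fin s → ℝ) (fun j => Pi.single j 1) (-1)

theorem sum_centeredSimplex (s : ℕ) : ∑ j, centeredSimplex s j = 0 := by
  ext c
  simp [centeredSimplex, Fin.sum_univ_castSucc, Pi.single_apply]

theorem eq_last_of_sum_smul_centeredSimplex_eq_zero {s : ℕ} {w : Fin (s + 1) → ℝ}
    (h : ∑ j, w j • centeredSimplex s j = 0) (j : Fin (s + 1)) : w j = w (Fin.last s) := by
  induction j using Fin.lastCases with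
  | last => rfl
  | cast c =>
    have := congrFun h c
    simp [centeredSimplex, Fin.sum_univ_castSucc, Pi.single_apply] at this
    linarith

def outerProduct (α β : Type*) : (α → ℝ) →ₗ[ℝ] (β → ℝ) →ₗ[ℝ] EuclideanSpace ℝ (α × β) :=
  LinearMap.mk₂ ℝ (fun y u => WithLp.toLp 2 fun ab => y ab.1 * u ab.2)
    (fun _ _ _ => by ext; simp [add_mul]) (fun _ _ _ => by ext; simp [mul_assoc])
    (fun _ _ _ => by ext; simp [mul_add]) (fun _ _ _ => by ext; simp [mul_left_comm])

@[simp]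
theorem outerProduct_apply {α β : Type*} (y : α → ℝ) (u : β → ℝ) (ab : α × β) :
    outerProduct α β y u ab = y ab.1 * u ab.2 := rfl

theorem eq_last_of_sum_outerProduct_centeredSimplex_eq_zero {α : Type*} {s : ℕ}
    {y : Fin (s + 1) → α → ℝ}
    (h : ∑ j, outerProduct α (Fin s) (y j) (centeredSimplex s j) = 0) (j : Fin (s + 1)) :
    y j = y (Fin.last s) := by
  ext a
  refine eq_last_of_sum_smul_centeredSimplex_eq_zero (w := fun j => y j a)
    (funext fun c => ?_) j
  simpa using congrArg (· (a, c)) h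

/-- `Option.elim' 1 q` is `q` in homogeneous coordinates: `1` at `none` and `q a` at `some a`. -/
theorem exists_forall_mem_convexHull_fiber {ι α κ : Type*} [Fintype ι] [Fintype κ]
    [DecidableEq κ] (p : ι → α → ℝ) {μ : ι → ℝ} (hμ0 : ∀ i, 0 ≤ μ i) (hμ1 : ∑ i, μ i = 1)
    (f : ι → κ) (j₀ : κ) (h : ∀ j, ∑ i with f i = j, μ i • Option.elim' 1 (p i) =
      ∑ i with f i = j₀, μ i • Option.elim' 1 (p i)) :
    ∃ x : α → ℝ, ∀ j, x ∈ convexHull ℝ (p '' {i | f i = j}) := by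
  set y := ∑ i with f i = j₀, μ i • Option.elim' 1 (p i)
  have hw (j : κ) : ∑ i with f i = j, μ i = y none := by simpa using congrFun (h j) none
  have hy : Fintype.card κ * y none = 1 := by
    rw [← hμ1, ← sum_fiberwise univ f μ]
    simp [hw]
  have hy0 : 0 < y none := pos_of_mul_pos_right (hy ▸ one_pos) (Nat.cast_nonneg _)
  refine ⟨fun a => (y none)⁻¹ * y (some a), fun j => ?_⟩
  have hmem := Finset.centerMass_mem_convexHull (s := p '' {i | f i = j}) {i | f i = j}
    (fun i _ => hμ0 i) (hw j ▸ hy0) (fun i hi => Set.mem_image_of_mem p (by simpa using hi))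
  convert hmem using 1
  ext a
  have hya : ∑ i with f i = j, μ i * p i a = y (some a) := by
    simpa using congrFun (h j) (some a)
  simp [Finset.centerMass, hw j, hya]

theorem exists_tverberg_coloring {ι α : Type*} [Fintype ι] [Fintype α] {s : ℕ}
    (hcard : (Fintype.card α + 1) * s < Fintype.card ι) (p : ι → α → ℝ) :
    ∃ f : ι → Fin (s + 1), ∃ x : α → ℝ, ∀ j, x ∈ convexHull ℝ (p '' {i | f i = j}) := by
  let T i j := outerProduct (Option α) (Fin s) (Option.elim' 1 (p i)) (centeredSimplex s j)
  have hT i : (0 : EuclideanSpace ℝ _) ∈ convexHull ℝ (Set.range (T i)) :=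
    zero_mem_convexHull_range_of_sum_eq_zero (by simp [T, ← map_sum, sum_centeredSimplex])
  obtain ⟨f, hf⟩ := colorful_caratheodory_s1 (by simpa using hcard) T hT
  obtain ⟨μ, hμ0, hμ1, hμ⟩ := exists_weights_of_mem_convexHull_range hf
  refine ⟨f, exists_forall_mem_convexHull_fiber p hμ0 hμ1 f (Fin.last s)
    (eq_last_of_sum_outerProduct_centeredSimplex_eq_zero ?_)⟩
  rw [← hμ, ← sum_fiberwise univ f]
  refine sum_congr rfl fun j _ => ?_
  simp only [T, map_sum, map_smul, LinearMap.sum_apply, LinearMap.smul_apply]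
  exact sum_congr rfl fun i hi => by rw [(mem_filter.1 hi).2]

theorem tverberg (d r : ℕ) (hr : 1 ≤ r) (p : Fin ((d + 1) * (r - 1) + 1) → Fin d → ℝ) :
    ∃ A : Fin r → Finset (Fin ((d + 1) * (r - 1) + 1)),
      (∀ j k, j ≠ k → Disjoint (A j) (A k)) ∧
      (Finset.univ.biUnion A = Finset.univ) ∧
      ∃ x : Fin d → ℝ, ∀ j, x ∈ convexHull ℝ (p '' ↑(A j)) := by
  obtain ⟨f, x, hx⟩ := exists_tverberg_coloring (s := r - 1) (by simp) p
  let c : Fin (r - 1 + 1) ≃ Fin r := finCongr (by omega)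
  refine ⟨fun j => {i | c (f i) = j}, fun j k hjk => ?_, ?_, x, fun j => ?_⟩
  · exact disjoint_filter.2 fun i _ hj hk => hjk (hj ▸ hk)
  · ext i; simp
  · convert hx (c.symm j) using 3
    ext i
    simp [← Equiv.eq_symm_apply]
end

section
/- Let M₁, M₂, …, M_{n+1} be finite subsets of ℝⁿ such that the origin 0 lies in the convex hull of each Mᵢ. Then there exist points mᵢ ∈ Mᵢ (one from each set) such that 0 lies in the convex hull of {m₁, m₂, …, m_{n+1}}. -/
/-!
Among all transversals (one point from each `M i`), take one whose convex hull `K` comes closest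
to the origin, and let `x` be the point of `K` nearest to `0`. If `x ≠ 0`, every point of `K`
satisfies `‖x‖² ≤ ⟪x, ·⟫`, so `x` lies in the hull of affinely independent points on the
hyperplane `⟪x, ·⟫ = ‖x‖²`, which avoids `0`: at most `n` of them, so some colour `i₀` is not
needed. Since `0` lies in the hull of `M i₀`, some `p ∈ M i₀` has `⟪x, p⟫ ≤ 0`; replacing the
point of colour `i₀` by `p` gives a transversal whose hull still contains `x` and also `p`, so `x`
is still nearest to `0` there and `‖x‖² ≤ ⟪x, p⟫ ≤ 0`, a contradiction.
-/

open Module RealInnerProductSpace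

theorem AffineIndependent.card_le_finrank_of_forall_apply_eq {K V ι : Type*} [DivisionRing K]
    [AddCommGroup V] [Module K V] [FiniteDimensional K V] [Fintype ι] {p : ι → V}
    (hp : AffineIndependent K p) {f : Dual K V} (hf : f ≠ 0) {c : K} (hpf : ∀ i, f (p i) = c) :
    Fintype.card ι ≤ finrank K V := by
  have hspan : vectorSpan K (Set.range p) ≤ LinearMap.ker f := by
    rw [vectorSpan_def, Submodule.span_le]
    rintro _ ⟨_, ⟨i, rfl⟩, _, ⟨j, rfl⟩, rfl⟩
    simp [hpf]
  have := Submodule.finrank_mono hspan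
  have := Dual.finrank_ker_add_one_of_ne_zero hf
  have := hp.card_le_finrank_succ
  omega

theorem exists_subset_range_update_of_card_lt {α ι : Type*} [Fintype ι] [DecidableEq ι]
    {m : ι → α} {t : Finset α} (ht : ↑t ⊆ Set.range m) (hcard : t.card < Fintype.card ι) :
    ∃ i₀, ∀ a, (t : Set α) ⊆ Set.range (Function.update m i₀ a) := by
  choose g hg using fun b : t => ht b.2
  obtain ⟨i₀, hi₀⟩ : ∃ i₀, ∀ b, g b ≠ i₀ := by
    by_contra! hsurj
    exact (Fintype.card_le_of_surjective g hsurj).not_gt (by simpa using hcard)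
  refine ⟨i₀, fun a b hb => ⟨g ⟨b, hb⟩, ?_⟩⟩
  rw [Function.update_of_ne (hi₀ _), hg]

theorem LinearEquiv.apply_mem_convexHull_image_iff {𝕜 E F : Type*} [Field 𝕜] [LinearOrder 𝕜]
    [IsStrictOrderedRing 𝕜] [AddCommGroup E] [Module 𝕜 E] [AddCommGroup F] [Module 𝕜 F]
    (L : E ≃ₗ[𝕜] F) {s : Set E} {x : E} :
    L x ∈ convexHull 𝕜 (L '' s) ↔ x ∈ convexHull 𝕜 s := by
  rw [← LinearEquiv.coe_toLinearMap, ← LinearMap.image_convexHull]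
  simp

section InnerProductSpace

variable {E : Type*} [NormedAddCommGroup E] [InnerProductSpace ℝ E]

theorem sq_norm_le_inner_of_isMinOn_norm {K : Set E} (hK : Convex ℝ K) {x : E} (hx : x ∈ K)
    (hmin : IsMinOn (‖·‖) K x) {w : E} (hw : w ∈ K) : ‖x‖ ^ 2 ≤ ⟪x, w⟫ := by
  have hproj : ‖0 - x‖ = ⨅ v : K, ‖0 - (v : E)‖ := by
    simpa using (hmin.iInf_eq hx).symm
  have := (norm_eq_iInf_iff_real_inner_le_zero hK hx).1 hproj w hw
  rw [zero_sub, inner_neg_left, inner_sub_right, real_inner_self_eq_norm_sq] at this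
  linarith

theorem exists_finset_card_le_finrank_of_isMinOn_norm [FiniteDimensional ℝ E] {s : Set E}
    {x : E} (hx₀ : x ≠ 0) (hx : x ∈ convexHull ℝ s) (hmin : IsMinOn (‖·‖) (convexHull ℝ s) x) :
    ∃ t : Finset E, ↑t ⊆ s ∧ t.card ≤ finrank ℝ E ∧ x ∈ convexHull ℝ (t : Set E) := by
  classical
  obtain ⟨ι, _, z, w, hzs, hz, hw₀, hw₁, hxzw⟩ := eq_pos_convex_span_of_mem_convexHull hx
  have hge : ∀ i, ‖x‖ ^ 2 ≤ ⟪x, z i⟫ := fun i =>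
    sq_norm_le_inner_of_isMinOn_norm (convex_convexHull ℝ s) hx hmin
      (subset_convexHull ℝ s (hzs ⟨i, rfl⟩))
  -- the `⟪x, z i⟫ ≥ ‖x‖²` average to `⟪x, x⟫` with positive weights, so all are equalities
  have heq : ∀ i, ⟪x, z i⟫ = ‖x‖ ^ 2 := by
    have hsum : ∑ i, w i * (⟪x, z i⟫ - ‖x‖ ^ 2) = 0 := by
      simp only [mul_sub, Finset.sum_sub_distrib, ← Finset.sum_mul, hw₁, one_mul,
        ← real_inner_smul_right, ← inner_sum, hxzw, real_inner_self_eq_norm_sq, sub_self]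
    intro i
    have := (Finset.sum_eq_zero_iff_of_nonneg fun j _ =>
      mul_nonneg (hw₀ j).le (sub_nonneg.2 (hge j))).1 hsum i (Finset.mem_univ i)
    linarith [(mul_eq_zero.1 this).resolve_left (hw₀ i).ne']
  have hf : innerₗ E x ≠ 0 := fun h => hx₀ (by simpa using LinearMap.congr_fun h x)
  refine ⟨Finset.univ.image z, by simpa using hzs,
    Finset.card_image_le.trans (hz.card_le_finrank_of_forall_apply_eq hf heq), ?_⟩
  rw [← hxzw]
  exact (convex_convexHull ℝ _).sum_mem (fun i _ => (hw₀ i).le) hw₁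
    fun i _ => subset_convexHull ℝ _ (by simp)

theorem colorful_caratheodory_of_innerProductSpace [FiniteDimensional ℝ E] {ι : Type*}
    [Fintype ι] (M : ι → Finset E) (hcard : finrank ℝ E < Fintype.card ι)
    (h : ∀ i, (0 : E) ∈ convexHull ℝ (M i : Set E)) :
    ∃ m : ι → E, (∀ i, m i ∈ M i) ∧ (0 : E) ∈ convexHull ℝ (Set.range m) := by
  classical
  set T := Set.univ.pi fun i => (M i : Set E)
  set S := ⋃ m ∈ T, convexHull ℝ (Set.range m)
  have hS : IsCompact S := (Set.Finite.pi fun i => (M i).finite_toSet).isCompact_biUnion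
    fun m _ => (Set.finite_range m).isCompact_convexHull ℝ
  have hSne : S.Nonempty := by
    have : Nonempty ι := Fintype.card_pos_iff.1 (by omega)
    obtain ⟨m, hm⟩ : T.Nonempty := Set.univ_pi_nonempty_iff.2 fun i =>
      convexHull_nonempty_iff.1 ⟨0, h i⟩
    exact Set.nonempty_biUnion.2 ⟨m, hm, (Set.range_nonempty m).convexHull⟩
  obtain ⟨x, hxS, hxmin⟩ := hS.exists_isMinOn hSne continuous_norm.continuousOn
  obtain ⟨m, hmT, hxm⟩ := Set.mem_iUnion₂.1 hxS
  have hmin : ∀ m' ∈ T, IsMinOn (‖·‖) (convexHull ℝ (Set.range m')) x := fun m' hm' =>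
    hxmin.on_subset (Set.subset_biUnion_of_mem (u := fun m => convexHull ℝ (Set.range m)) hm')
  suffices x = 0 from ⟨m, fun i => hmT i (Set.mem_univ i), this ▸ hxm⟩
  by_contra hx₀
  obtain ⟨t, htm, htcard, hxt⟩ :=
    exists_finset_card_le_finrank_of_isMinOn_norm hx₀ hxm (hmin m hmT)
  obtain ⟨i₀, hi₀⟩ := exists_subset_range_update_of_card_lt htm (htcard.trans_lt hcard)
  obtain ⟨p, hp, hxp⟩ := ((innerₗ E x).concaveOn convex_univ).exists_le_of_mem_convexHull
    (Set.subset_univ _) (h i₀)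
  set m' := Function.update m i₀ p
  have hm'T : m' ∈ T := fun i _ => by
    rcases eq_or_ne i i₀ with rfl | hi
    · simpa [m'] using hp
    · simpa [m', hi] using hmT i (Set.mem_univ i)
  have hxp' : ‖x‖ ^ 2 ≤ ⟪x, p⟫ :=
    sq_norm_le_inner_of_isMinOn_norm (convex_convexHull ℝ _) (convexHull_mono (hi₀ p) hxt)
      (hmin m' hm'T) (subset_convexHull ℝ _ ⟨i₀, Function.update_self i₀ p m⟩)
  have : ‖x‖ ^ 2 ≤ 0 := hxp'.trans (by simpa using hxp)
  exact hx₀ (norm_eq_zero.1 (by nlinarith [norm_nonneg x]))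

end InnerProductSpace

theorem colorful_caratheodory_of_finrank_lt_card {V ι : Type*} [AddCommGroup V] [Module ℝ V]
    [FiniteDimensional ℝ V] [Fintype ι] (M : ι → Finset V) (hcard : finrank ℝ V < Fintype.card ι)
    (h : ∀ i, (0 : V) ∈ convexHull ℝ (M i : Set V)) :
    ∃ m : ι → V, (∀ i, m i ∈ M i) ∧ (0 : V) ∈ convexHull ℝ (Set.range m) := by
  classical
  let L : V ≃ₗ[ℝ] EuclideanSpace ℝ (Fin (finrank ℝ V)) := .ofFinrankEq _ _ (by simp)
  obtain ⟨m, hmM, hm0⟩ := colorful_caratheodory_of_innerProductSpace (fun i => (M i).image L)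
    (by simpa using hcard) fun i => by
      simpa using L.apply_mem_convexHull_image_iff.2 (h i)
  refine ⟨L.symm ∘ m, fun i => ?_, ?_⟩
  · obtain ⟨p, hp, hpm⟩ := Finset.mem_image.1 (hmM i)
    simpa [← hpm] using hp
  · simpa [Set.range_comp] using L.symm.apply_mem_convexHull_image_iff.2 hm0

theorem colorful_caratheodory (n : ℕ) (M : Fin (n + 1) → Finset (Fin n → ℝ))
    (h : ∀ i, (0 : Fin n → ℝ) ∈ convexHull ℝ (↑(M i) : Set (Fin n → ℝ))) :
    ∃ m : Fin (n + 1) → (Fin n → ℝ), (∀ i, m i ∈ M i) ∧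
      (0 : Fin n → ℝ) ∈ convexHull ℝ (Set.range m) :=
  colorful_caratheodory_of_finrank_lt_card M (by simp) h
end

section
/- Let M₁, M₂, M₃ be finite subsets of ℝ² each containing the origin 0 in its convex hull. Then there exist m₁ ∈ M₁, m₂ ∈ M₂, m₃ ∈ M₃ with 0 in the convex hull of {m₁, m₂, m₃}. -/
open Finset

namespace CC

abbrev V := Fin 2 → ℝ
def dt (a v : V) : ℝ := a 0 * v 0 + a 1 * v 1
def cr (a v : V) : ℝ := a 0 * v 1 - a 1 * v 0

lemma dt_comb (a v w : V) (x y : ℝ) : dt a (x • v + y • w) = x * dt a v + y * dt a w := by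
  simp [dt, Pi.add_apply, Pi.smul_apply, smul_eq_mul]; ring

lemma cr_comb (a v w : V) (x y : ℝ) : cr a (x • v + y • w) = x * cr a v + y * cr a w := by
  simp [cr, Pi.add_apply, Pi.smul_apply, smul_eq_mul]; ring

lemma dt_comb3 (a u v w : V) (x y z : ℝ) :
    dt a (x • u + y • v + z • w) = x * dt a u + y * dt a v + z * dt a w := by
  simp [dt, Pi.add_apply, Pi.smul_apply, smul_eq_mul]; ring

lemma cr_comb3 (a u v w : V) (x y z : ℝ) :
    cr a (x • u + y • v + z • w) = x * cr a u + y * cr a v + z * cr a w := by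
  simp [cr, Pi.add_apply, Pi.smul_apply, smul_eq_mul]; ring

lemma dt_smul (a v : V) (x : ℝ) : dt a (x • v) = x * dt a v := by
  simp [dt, Pi.smul_apply, smul_eq_mul]; ring

lemma cr_smul (a v : V) (x : ℝ) : cr a (x • v) = x * cr a v := by
  simp [cr, Pi.smul_apply, smul_eq_mul]; ring

lemma dt_neg (a v : V) : dt a (-v) = -dt a v := by simp [dt]; ring

lemma cr_neg (a v : V) : cr a (-v) = -cr a v := by simp [cr]; ring

lemma dt_zero (a : V) : dt a 0 = 0 := by simp [dt]

lemma cr_zero (a : V) : cr a 0 = 0 := by simp [cr]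

lemma cr_self (a : V) : cr a a = 0 := by simp [cr]; ring

lemma islin (r s : ℝ) : IsLinearMap ℝ (fun v : V => r * v 0 + s * v 1) := by
  constructor
  · intro v w; simp [Pi.add_apply]; ring
  · intro c v; simp [Pi.smul_apply, smul_eq_mul]; ring

lemma islin_cr (a : V) : IsLinearMap ℝ (cr a) := by
  have : cr a = fun v : V => (-a 1) * v 0 + a 0 * v 1 := by funext v; unfold cr; ring
  rw [this]; exact islin _ _

lemma islin_neg_cr (a : V) : IsLinearMap ℝ (fun v => -cr a v) := by
  have : (fun v => -cr a v) = fun v : V => (a 1) * v 0 + (-a 0) * v 1 := by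
    funext v; unfold cr; ring
  rw [this]; exact islin _ _

lemma islin_dc (a : V) (c : ℝ) : IsLinearMap ℝ (fun v => dt a v - c * cr a v) := by
  have : (fun v => dt a v - c * cr a v)
      = fun v : V => (a 0 + c * a 1) * v 0 + (a 1 - c * a 0) * v 1 := by
    funext v; unfold dt cr; ring
  rw [this]; exact islin _ _

lemma hull_ne {M : Finset V} (h : (0:V) ∈ convexHull ℝ (↑M : Set V)) : M.Nonempty := by
  rcases M.eq_empty_or_nonempty with rfl | hne
  · simp at h
  · exact hne

lemma dt_pos {a : V} (ha : a ≠ 0) : 0 < dt a a := by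
  have h : a 0 ≠ 0 ∨ a 1 ≠ 0 := by
    by_contra hc
    push_neg at hc
    exact ha (by ext i; fin_cases i <;> simp [hc.1, hc.2])
  unfold dt
  rcases h with h | h
  · nlinarith [mul_self_pos.mpr h, mul_self_nonneg (a 1)]
  · nlinarith [mul_self_pos.mpr h, mul_self_nonneg (a 0)]

lemma exists_nonpos (M : Finset V) (hM : (0:V) ∈ convexHull ℝ (↑M : Set V))
    (f : V → ℝ) (hf : IsLinearMap ℝ f) : ∃ m ∈ M, f m ≤ 0 := by
  by_contra hc
  push_neg at hc
  have hsub : convexHull ℝ (↑M : Set V) ⊆ {x | (0:ℝ) < f x} :=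
    convexHull_min (fun x hx => hc x (by exact_mod_cast hx)) (convex_halfSpace_gt hf 0)
  have := hsub hM
  simp [hf.map_zero] at this

lemma collin {a m : V} (ha : a ≠ 0) (h : cr a m = 0) : ∃ c : ℝ, m = c • a := by
  have h' : a 0 ≠ 0 ∨ a 1 ≠ 0 := by
    by_contra hc
    push_neg at hc
    exact ha (by ext i; fin_cases i <;> simp [hc.1, hc.2])
  unfold cr at h
  rcases h' with h0 | h1
  · refine ⟨m 0 / a 0, ?_⟩
    ext i; fin_cases i <;> simp [Pi.smul_apply, smul_eq_mul] <;> field_simp <;> linarith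
  · refine ⟨m 1 / a 1, ?_⟩
    ext i; fin_cases i <;> simp [Pi.smul_apply, smul_eq_mul] <;> field_simp <;> linarith

lemma eq_of_dc {a v w : V} (ha : a ≠ 0) (hp : dt a v = dt a w) (hq : cr a v = cr a w) :
    v = w := by
  have hA : 0 < a 0 * a 0 + a 1 * a 1 := by have := dt_pos ha; unfold dt at this; linarith
  unfold dt at hp
  unfold cr at hq
  ext i
  fin_cases i
  · have h : (a 0 * a 0 + a 1 * a 1) * (v 0 - w 0)
        = a 0 * ((a 0 * v 0 + a 1 * v 1) - (a 0 * w 0 + a 1 * w 1))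
          - a 1 * ((a 0 * v 1 - a 1 * v 0) - (a 0 * w 1 - a 1 * w 0)) := by ring
    rw [hp, hq] at h
    simp at h
    rcases h with h | h
    · linarith
    · show v 0 = w 0; linarith
  · have h : (a 0 * a 0 + a 1 * a 1) * (v 1 - w 1)
        = a 1 * ((a 0 * v 0 + a 1 * v 1) - (a 0 * w 0 + a 1 * w 1))
          + a 0 * ((a 0 * v 1 - a 1 * v 0) - (a 0 * w 1 - a 1 * w 0)) := by ring
    rw [hp, hq] at h
    simp at h
    rcases h with h | h
    · linarith
    · show v 1 = w 1; linarith

lemma mem_hull3 {x y z : V} {s t u : ℝ} (hs : 0 ≤ s) (ht : 0 ≤ t) (hu : 0 ≤ u)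
    (hsum : 0 < s + t + u) (h : s • x + t • y + u • z = 0) :
    (0:V) ∈ convexHull ℝ ({x, y, z} : Set V) := by
  have hmem := Finset.centerMass_mem_convexHull (s := ({x, y, z} : Set V))
    (Finset.univ : Finset (Fin 3)) (w := ![s, t, u])
    (by intro i _; fin_cases i <;> simpa)
    (by rw [Fin.sum_univ_three]; simpa using hsum)
    (z := ![x, y, z]) (by intro i _; fin_cases i <;> simp)
  have hcm : (Finset.univ : Finset (Fin 3)).centerMass ![s, t, u] ![x, y, z] = 0 := by
    rw [Finset.centerMass]
    rw [Fin.sum_univ_three, Fin.sum_univ_three]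
    simp only [Matrix.cons_val_zero, Matrix.cons_val_one, Matrix.head_cons,
      Matrix.cons_val_two, Matrix.tail_cons]
    rw [h, smul_zero]
  rwa [hcm] at hmem

lemma sum_contra (M : Finset V) (w qf pf : V → ℝ)
    (hw0 : ∀ y ∈ M, 0 ≤ w y) (hw1 : ∑ y ∈ M, w y = 1)
    (hq : ∑ y ∈ M, w y * qf y = 0) (hp : ∑ y ∈ M, w y * pf y = 0)
    (hqneg : ∀ y ∈ M, qf y ≤ 0) (hno : ∀ y ∈ M, qf y = 0 → 0 < pf y) : False := by
  have hterm : ∀ y ∈ M, w y * qf y = 0 :=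
    (Finset.sum_eq_zero_iff_of_nonpos
      (fun y hy => by nlinarith [hw0 y hy, hqneg y hy])).mp hq
  have hqz : ∀ y ∈ M, 0 < w y → qf y = 0 := by
    intro y hy hwy
    have := hterm y hy
    rcases mul_eq_zero.mp this with h | h
    · exact absurd h (ne_of_gt hwy)
    · exact h
  have hpterm : ∀ y ∈ M, 0 ≤ w y * pf y := by
    intro y hy
    rcases (hw0 y hy).lt_or_eq with h | h
    · exact le_of_lt (mul_pos h (hno y hy (hqz y hy h)))
    · rw [← h]; simp
  have hall : ∀ y ∈ M, w y * pf y = 0 := (Finset.sum_eq_zero_iff_of_nonneg hpterm).mp hp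
  have hex : ∃ y ∈ M, 0 < w y := by
    by_contra hc
    push_neg at hc
    have : ∑ y ∈ M, w y = 0 :=
      Finset.sum_eq_zero (fun y hy => le_antisymm (hc y hy) (hw0 y hy))
    rw [this] at hw1
    norm_num at hw1
  obtain ⟨y, hy, hwy⟩ := hex
  have h1 : pf y = 0 := by
    rcases mul_eq_zero.mp (hall y hy) with h | h
    · exact absurd h (ne_of_gt hwy)
    · exact h
  have h2 : 0 < pf y := hno y hy (hqz y hy hwy)
  linarith

lemma get_weights (M : Finset V) (hM : (0:V) ∈ convexHull ℝ (↑M : Set V)) :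
    ∃ w : V → ℝ, (∀ y ∈ M, 0 ≤ w y) ∧ ∑ y ∈ M, w y = 1 ∧ ∑ y ∈ M, w y • y = 0 := by
  rw [Finset.convexHull_eq] at hM
  obtain ⟨w, hw0, hw1, hcm⟩ := hM
  refine ⟨w, hw0, hw1, ?_⟩
  rw [Finset.centerMass_eq_of_sum_1 _ _ hw1] at hcm
  simpa using hcm

lemma coord_sums (M : Finset V) (w : V → ℝ) (a : V) (hsum : ∑ y ∈ M, w y • y = 0) :
    ∑ y ∈ M, w y * cr a y = 0 ∧ ∑ y ∈ M, w y * dt a y = 0 := by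
  have h0 : ∑ y ∈ M, w y * y 0 = 0 := by
    have := congrFun hsum 0
    rw [Finset.sum_apply] at this
    simpa using this
  have h1 : ∑ y ∈ M, w y * y 1 = 0 := by
    have := congrFun hsum 1
    rw [Finset.sum_apply] at this
    simpa using this
  constructor
  · have : ∑ y ∈ M, w y * cr a y
        = a 0 * (∑ y ∈ M, w y * y 1) - a 1 * (∑ y ∈ M, w y * y 0) := by
      rw [Finset.mul_sum, Finset.mul_sum, ← Finset.sum_sub_distrib]
      exact Finset.sum_congr rfl (fun y _ => by unfold cr; ring)
    rw [this, h0, h1]; ring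
  · have : ∑ y ∈ M, w y * dt a y
        = a 0 * (∑ y ∈ M, w y * y 0) + a 1 * (∑ y ∈ M, w y * y 1) := by
      rw [Finset.mul_sum, Finset.mul_sum, ← Finset.sum_add_distrib]
      exact Finset.sum_congr rfl (fun y _ => by unfold dt; ring)
    rw [this, h0, h1]; ring

lemma cone_pair (M : Finset V) (hM : (0:V) ∈ convexHull ℝ (↑M : Set V))
    (a : V) (ha : a ≠ 0) :
    (∃ x ∈ M, ∃ y ∈ M, ∃ s t : ℝ, 0 < s ∧ 0 < t ∧ s • x + t • y = 0) ∨
    (∃ b ∈ M, ∃ b' ∈ M, ∃ l m : ℝ, 0 ≤ l ∧ 0 ≤ m ∧ l • b + m • b' = -a ∧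
      0 ≤ cr a b ∧ cr a b' ≤ 0) := by
  classical
  obtain ⟨w, hw0, hw1, hsum⟩ := get_weights M hM
  obtain ⟨hq0, hp0⟩ := coord_sums M w a hsum
  have hA : 0 < dt a a := dt_pos ha
  by_cases hdeg : ∃ m ∈ M, cr a m = 0 ∧ dt a m ≤ 0
  · obtain ⟨m, hm, hcm, hpm⟩ := hdeg
    obtain ⟨c, rfl⟩ := collin ha hcm
    have hdm : dt a (c • a) = c * dt a a := dt_smul a a c
    have hc : c ≤ 0 := by nlinarith [hdm ▸ hpm]
    rcases hc.lt_or_eq with hclt | hceq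
    · refine Or.inr ⟨c • a, hm, c • a, hm, -(1/c), 0, ?_, le_refl 0, ?_, ?_, ?_⟩
      · have := one_div_neg.mpr hclt; linarith
      · rw [smul_smul, zero_smul, add_zero]
        have h1 : -(1/c) * c = -1 := by
          rw [neg_mul, one_div_mul_cancel hclt.ne]
        rw [h1, neg_one_smul]
      · rw [cr_smul, cr_self, mul_zero]
      · rw [cr_smul, cr_self, mul_zero]
    · refine Or.inl ⟨c • a, hm, c • a, hm, 1, 1, one_pos, one_pos, ?_⟩
      rw [hceq]
      simp
  · push_neg at hdeg
    have exU : ∃ b ∈ M, 0 < cr a b := by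
      by_contra hc
      push_neg at hc
      exact sum_contra M w (cr a) (dt a) hw0 hw1 hq0 hp0 hc hdeg
    have exL : ∃ b ∈ M, cr a b < 0 := by
      by_contra hc
      push_neg at hc
      refine sum_contra M w (fun y => -cr a y) (dt a) hw0 hw1 ?_ hp0
        (fun y hy => neg_nonpos.mpr (hc y hy))
        (fun y hy h => hdeg y hy (neg_eq_zero.mp h))
      simp only [mul_neg]
      rw [Finset.sum_neg_distrib, hq0, neg_zero]
    set U := M.filter (fun m => 0 < cr a m) with hU
    set L := M.filter (fun m => cr a m < 0) with hL
    have hUne : U.Nonempty := by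
      obtain ⟨b, hb, hcb⟩ := exU
      exact ⟨b, Finset.mem_filter.mpr ⟨hb, hcb⟩⟩
    have hLne : L.Nonempty := by
      obtain ⟨b, hb, hcb⟩ := exL
      exact ⟨b, Finset.mem_filter.mpr ⟨hb, hcb⟩⟩
    set f : V → ℝ := fun m => dt a m / cr a m with hf
    obtain ⟨b, hbU, hbmin⟩ := U.exists_min_image f hUne
    obtain ⟨b', hbL, hbmax⟩ := L.exists_max_image f hLne
    obtain ⟨hbM, hcb⟩ := Finset.mem_filter.mp hbU
    obtain ⟨hbM', hcb'⟩ := Finset.mem_filter.mp hbL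
    have hle : f b ≤ f b' := by
      by_contra hgt
      push_neg at hgt
      set c := (f b + f b') / 2 with hc
      have hc1 : f b' < c := by rw [hc]; linarith
      have hc2 : c < f b := by rw [hc]; linarith
      have hpos : ∀ m ∈ M, 0 < dt a m - c * cr a m := by
        intro m hm
        rcases lt_trichotomy (cr a m) 0 with h | h | h
        · have hfm : f m ≤ f b' := hbmax m (Finset.mem_filter.mpr ⟨hm, h⟩)
          have hlt : f m - c < 0 := by linarith
          have hdm : f m * cr a m = dt a m := by
            simp only [hf]; exact div_mul_cancel₀ _ (ne_of_lt h)
          nlinarith [mul_pos_of_neg_of_neg hlt h]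
        · have := hdeg m hm h
          rw [h]; linarith
        · have hfm : f b ≤ f m := hbmin m (Finset.mem_filter.mpr ⟨hm, h⟩)
          have hlt : 0 < f m - c := by linarith
          have hdm : f m * cr a m = dt a m := by
            simp only [hf]; exact div_mul_cancel₀ _ (ne_of_gt h)
          nlinarith [mul_pos hlt h]
      obtain ⟨m, hm, hle'⟩ := exists_nonpos M hM (fun v => dt a v - c * cr a v) (islin_dc a c)
      exact absurd hle' (not_le.mpr (hpos m hm))
    have hcbne : cr a b ≠ 0 := ne_of_gt hcb
    have hcb'ne : cr a b' ≠ 0 := ne_of_lt hcb'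
    have h1 : f b * cr a b = dt a b := by
      simp only [hf]; exact div_mul_cancel₀ _ hcbne
    have h2 : f b' * cr a b' = dt a b' := by
      simp only [hf]; exact div_mul_cancel₀ _ hcb'ne
    have hqz : cr a ((-cr a b') • b + (cr a b) • b') = 0 := by
      rw [cr_comb]; ring
    have hPv : dt a ((-cr a b') • b + (cr a b) • b')
        = -cr a b' * dt a b + cr a b * dt a b' := dt_comb a b b' _ _
    have e1 : -cr a b' * dt a b = (cr a b * -cr a b') * f b := by
      simp only [hf]
      field_simp
    have e2 : cr a b * dt a b' = -((cr a b * -cr a b') * f b') := by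
      simp only [hf]
      field_simp
    have hposc : (0:ℝ) ≤ cr a b * -cr a b' := le_of_lt (mul_pos hcb (by linarith))
    have hmul := mul_le_mul_of_nonneg_left hle hposc
    have hPle : -cr a b' * dt a b + cr a b * dt a b' ≤ 0 := by linarith
    rcases hPle.lt_or_eq with hPlt | hP0
    · have hPne : -cr a b' * dt a b + cr a b * dt a b' ≠ 0 := ne_of_lt hPlt
      refine Or.inr ⟨b, hbM, b', hbM',
        dt a a / -(-cr a b' * dt a b + cr a b * dt a b') * -cr a b',
        dt a a / -(-cr a b' * dt a b + cr a b * dt a b') * cr a b,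
        ?_, ?_, ?_, le_of_lt hcb, le_of_lt hcb'⟩
      · have hκ : 0 < dt a a / -(-cr a b' * dt a b + cr a b * dt a b') :=
          div_pos hA (by linarith)
        nlinarith
      · have hκ : 0 < dt a a / -(-cr a b' * dt a b + cr a b * dt a b') :=
          div_pos hA (by linarith)
        nlinarith
      · have hPne' : cr a b' * dt a b - cr a b * dt a b' ≠ 0 := by
          intro h; exact hPne (by linarith)
        apply eq_of_dc ha
        · rw [dt_comb, dt_neg]
          have hinv : (-(-cr a b' * dt a b + cr a b * dt a b'))⁻¹
              * (-(-cr a b' * dt a b + cr a b * dt a b')) = 1 :=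
            inv_mul_cancel₀ (neg_ne_zero.mpr hPne)
          rw [div_eq_mul_inv]
          linear_combination (-(dt a a)) * hinv
        · rw [cr_comb, cr_neg, cr_self, neg_zero]
          have h := hqz
          rw [cr_comb] at h
          linear_combination (dt a a / -(-cr a b' * dt a b + cr a b * dt a b')) * h
    · refine Or.inl ⟨b, hbM, b', hbM', -cr a b', cr a b, by linarith, hcb, ?_⟩
      apply eq_of_dc ha
      · rw [hPv, dt_zero]; exact hP0
      · rw [hqz, cr_zero]

lemma pair_case (N P : Finset V)
    (hN : (0:V) ∈ convexHull ℝ (↑N : Set V)) (hP : (0:V) ∈ convexHull ℝ (↑P : Set V))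
    (x y : V) (s t : ℝ) (hs : 0 < s) (ht : 0 < t) (hxy : s • x + t • y = 0) :
    ∃ n ∈ N, ∃ p ∈ P, ∃ q : V, (q = x ∨ q = y) ∧
      (0:V) ∈ convexHull ℝ ({n, q, p} : Set V) := by
  classical
  obtain ⟨n0, hn0⟩ := hull_ne hN
  obtain ⟨p0, hp0⟩ := hull_ne hP
  by_cases hx0 : x = 0
  · refine ⟨n0, hn0, p0, hp0, x, Or.inl rfl, ?_⟩
    apply subset_convexHull
    simp [hx0]
  · have hy : y = (-(s/t)) • x := by
      have h1 : t • y = (-s) • x := by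
        have h2 : t • y = -(s • x) := by
          rw [eq_neg_iff_add_eq_zero, add_comm]
          exact hxy
        rw [h2, neg_smul]
      calc y = (t⁻¹ * t) • y := by rw [inv_mul_cancel₀ ht.ne', one_smul]
        _ = t⁻¹ • (t • y) := by rw [mul_smul]
        _ = t⁻¹ • ((-s) • x) := by rw [h1]
        _ = (-(s/t)) • x := by rw [smul_smul, div_eq_mul_inv]; ring_nf
    obtain ⟨n, hn, hfn⟩ := exists_nonpos N hN (fun v => -cr x v) (islin_neg_cr x)
    obtain ⟨p, hp, hfp⟩ := exists_nonpos P hP (cr x) (islin_cr x)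
    have hτ : 0 ≤ cr x n := by simpa using hfn
    by_cases hτ0 : cr x n = 0
    · obtain ⟨α, hα⟩ := collin hx0 hτ0
      rcases le_or_gt α 0 with hαle | hαpos
      · refine ⟨n, hn, p, hp, x, Or.inl rfl, ?_⟩
        refine mem_hull3 (s := 1) (t := -α) (u := 0) one_pos.le (by linarith) le_rfl
          (by linarith) ?_
        rw [hα, one_smul, zero_smul, add_zero, ← add_smul]
        simp
      · refine ⟨n, hn, p, hp, y, Or.inr rfl, ?_⟩
        have hcoef : 0 ≤ α * t / s := by positivity
        refine mem_hull3 (s := 1) (t := α * t / s) (u := 0) one_pos.le hcoef le_rfl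
          (by linarith) ?_
        have h5 : (α * t / s) • y = (-α) • x := by
          rw [hy, smul_smul]
          congr 1
          field_simp
        rw [hα, one_smul, zero_smul, add_zero, h5, ← add_smul]
        simp
    · have hτpos : 0 < cr x n := lt_of_le_of_ne hτ (Ne.symm hτ0)
      have hcrw : cr x ((-cr x p) • n + (cr x n) • p) = 0 := by rw [cr_comb]; ring
      obtain ⟨c, hc⟩ := collin hx0 hcrw
      rcases le_or_gt c 0 with hcle | hcpos
      · refine ⟨n, hn, p, hp, x, Or.inl rfl, ?_⟩
        refine mem_hull3 (s := -cr x p) (t := -c) (u := cr x n)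
          (by linarith) (by linarith) hτ (by linarith) ?_
        have : (-cr x p) • n + (-c) • x + (cr x n) • p
            = ((-cr x p) • n + (cr x n) • p) - c • x := by
          module
        rw [this, hc, sub_self]
      · refine ⟨n, hn, p, hp, y, Or.inr rfl, ?_⟩
        have hcoef : 0 ≤ c * t / s := by positivity
        refine mem_hull3 (s := -cr x p) (t := c * t / s) (u := cr x n)
          (by linarith) hcoef hτ (by linarith) ?_
        have h5 : (c * t / s) • y = (-c) • x := by
          rw [hy, smul_smul]
          congr 1
          field_simp
        have h6 : (-cr x p) • n + (-c) • x + (cr x n) • p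
            = ((-cr x p) • n + (cr x n) • p) - c • x := by
          module
        rw [h5, h6, hc, sub_self]

lemma combine (a b b' c c' : V) (ha : a ≠ 0)
    (l m : ℝ) (hl : 0 ≤ l) (hm : 0 ≤ m) (heq : l • b + m • b' = -a)
    (hqb : 0 ≤ cr a b) (hqb' : cr a b' ≤ 0)
    (al be : ℝ) (hal : 0 ≤ al) (hbe : 0 ≤ be) (heq2 : al • c + be • c' = -a)
    (hqc : 0 ≤ cr a c) (hqc' : cr a c' ≤ 0) :
    ∃ yv zv : V, (yv = b ∨ yv = b') ∧ (zv = c ∨ zv = c') ∧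
      (0:V) ∈ convexHull ℝ ({a, yv, zv} : Set V) := by
  classical
  have hA : 0 < dt a a := dt_pos ha
  -- helper to finish when k • v = -a
  have fin1 : ∀ (v zc : V) (k : ℝ), 0 ≤ k → k • v = -a →
      (0:V) ∈ convexHull ℝ ({a, v, zc} : Set V) := by
    intro v zc k hk hkv
    refine mem_hull3 (s := 1) (t := k) (u := 0) one_pos.le hk le_rfl (by linarith) ?_
    rw [one_smul, zero_smul, add_zero, hkv]
    simp
  -- scalar equations
  have hpb : l * dt a b + m * dt a b' = -(dt a a) := by
    have h := congrArg (dt a) heq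
    rwa [dt_comb, dt_neg] at h
  have hqe : l * cr a b + m * cr a b' = 0 := by
    have h := congrArg (cr a) heq
    rwa [cr_comb, cr_neg, cr_self, neg_zero] at h
  have hpc : al * dt a c + be * dt a c' = -(dt a a) := by
    have h := congrArg (dt a) heq2
    rwa [dt_comb, dt_neg] at h
  have hqe2 : al * cr a c + be * cr a c' = 0 := by
    have h := congrArg (cr a) heq2
    rwa [cr_comb, cr_neg, cr_self, neg_zero] at h
  -- degenerate: some singleton collinear with a does the job
  have degen : ∀ (u u' : V) (k k' : ℝ), 0 ≤ k → 0 ≤ k' → k • u + k' • u' = -a →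
      cr a u = 0 → cr a u' = 0 →
      (∃ g : ℝ, 0 ≤ g ∧ (g • u = -a ∨ g • u' = -a)) := by
    intro u u' k k' hk hk' hequ hu hu'
    obtain ⟨cu, rfl⟩ := collin ha hu
    obtain ⟨cu', rfl⟩ := collin ha hu'
    have hpu : k * (cu * dt a a) + k' * (cu' * dt a a) = -(dt a a) := by
      have h := congrArg (dt a) hequ
      rwa [dt_comb, dt_neg, dt_smul, dt_smul] at h
    have hsum : k * cu + k' * cu' = -1 := by
      have h : (k * cu + k' * cu' + 1) * dt a a = 0 := by linarith
      rcases mul_eq_zero.mp h with h' | h'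
      · linarith
      · exact absurd h' hA.ne'
    have hneg : k * cu < 0 ∨ k' * cu' < 0 := by
      by_contra hcon
      push_neg at hcon
      linarith [hcon.1, hcon.2]
    rcases hneg with hneg | hneg
    · have hcu : cu < 0 := by
        rcases lt_or_ge cu 0 with h | h
        · exact h
        · exfalso; nlinarith
      refine ⟨-(1/cu), by have := one_div_neg.mpr hcu; linarith, Or.inl ?_⟩
      rw [smul_smul, neg_mul, one_div_mul_cancel hcu.ne, neg_one_smul]
    · have hcu : cu' < 0 := by
        rcases lt_or_ge cu' 0 with h | h
        · exact h
        · exfalso; nlinarith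
      refine ⟨-(1/cu'), by have := one_div_neg.mpr hcu; linarith, Or.inr ?_⟩
      rw [smul_smul, neg_mul, one_div_mul_cancel hcu.ne, neg_one_smul]
  by_cases hb0 : cr a b = 0
  · by_cases hm0 : m = 0
    · refine ⟨b, c, Or.inl rfl, Or.inl rfl, fin1 b c l hl ?_⟩
      rw [hm0, zero_smul, add_zero] at heq
      exact heq
    · have hb'0 : cr a b' = 0 := by
        have : m * cr a b' = 0 := by rw [hb0] at hqe; linarith
        rcases mul_eq_zero.mp this with h | h
        · exact absurd h hm0
        · exact h
      obtain ⟨g, hg, hgor⟩ := degen b b' l m hl hm heq hb0 hb'0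
      rcases hgor with h | h
      · exact ⟨b, c, Or.inl rfl, Or.inl rfl, fin1 b c g hg h⟩
      · exact ⟨b', c, Or.inr rfl, Or.inl rfl, fin1 b' c g hg h⟩
  · by_cases hb'0 : cr a b' = 0
    · have hl0 : l = 0 := by
        have : l * cr a b = 0 := by rw [hb'0] at hqe; linarith
        rcases mul_eq_zero.mp this with h | h
        · exact h
        · exact absurd h hb0
      refine ⟨b', c, Or.inr rfl, Or.inl rfl, fin1 b' c m hm ?_⟩
      rw [hl0, zero_smul, zero_add] at heq
      exact heq
    · by_cases hc0 : cr a c = 0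
      · by_cases hbe0 : be = 0
        · refine ⟨b, c, Or.inl rfl, Or.inl rfl, ?_⟩
          rw [hbe0, zero_smul, add_zero] at heq2
          have := fin1 c b al hal heq2
          rwa [show ({a, c, b} : Set V) = {a, b, c} by rw [Set.pair_comm c b]] at this
        · have hc'0 : cr a c' = 0 := by
            have : be * cr a c' = 0 := by rw [hc0] at hqe2; linarith
            rcases mul_eq_zero.mp this with h | h
            · exact absurd h hbe0
            · exact h
          obtain ⟨g, hg, hgor⟩ := degen c c' al be hal hbe heq2 hc0 hc'0
          rcases hgor with h | h
          · refine ⟨b, c, Or.inl rfl, Or.inl rfl, ?_⟩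
            have := fin1 c b g hg h
            rwa [show ({a, c, b} : Set V) = {a, b, c} by rw [Set.pair_comm c b]] at this
          · refine ⟨b, c', Or.inl rfl, Or.inr rfl, ?_⟩
            have := fin1 c' b g hg h
            rwa [show ({a, c', b} : Set V) = {a, b, c'} by rw [Set.pair_comm c' b]] at this
      · by_cases hc'0 : cr a c' = 0
        · have hal0 : al = 0 := by
            have : al * cr a c = 0 := by rw [hc'0] at hqe2; linarith
            rcases mul_eq_zero.mp this with h | h
            · exact h
            · exact absurd h hc0
          refine ⟨b, c', Or.inl rfl, Or.inr rfl, ?_⟩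
          rw [hal0, zero_smul, zero_add] at heq2
          have := fin1 c' b be hbe heq2
          rwa [show ({a, c', b} : Set V) = {a, b, c'} by rw [Set.pair_comm c' b]] at this
        · -- main case: all crosses strictly signed
          have hcbpos : 0 < cr a b := lt_of_le_of_ne hqb (Ne.symm hb0)
          have hcb'neg : cr a b' < 0 := lt_of_le_of_ne hqb' hb'0
          have hccpos : 0 < cr a c := lt_of_le_of_ne hqc (Ne.symm hc0)
          have hcc'neg : cr a c' < 0 := lt_of_le_of_ne hqc' hc'0
          have hl0 : 0 < l := by
            rcases hl.lt_or_eq with h | h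
            · exact h
            · exfalso
              rw [← h, zero_mul, zero_add] at hqe
              have hm0 : m = 0 := by
                rcases mul_eq_zero.mp hqe with h' | h'
                · exact h'
                · exact absurd h' (ne_of_lt hcb'neg)
              rw [← h, hm0, zero_smul, zero_smul, add_zero] at heq
              exact ha (by simpa [neg_eq_zero] using heq.symm)
          have hal0 : 0 < al := by
            rcases hal.lt_or_eq with h | h
            · exact h
            · exfalso
              rw [← h, zero_mul, zero_add] at hqe2
              have hbe0 : be = 0 := by
                rcases mul_eq_zero.mp hqe2 with h' | h'
                · exact h'
                · exact absurd h' (ne_of_lt hcc'neg)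
              rw [← h, hbe0, zero_smul, zero_smul, add_zero] at heq2
              exact ha (by simpa [neg_eq_zero] using heq2.symm)
          have hDb : l * (dt a b * cr a b' - cr a b * dt a b')
              = -(dt a a) * cr a b' := by
            linear_combination (cr a b') * hpb - (dt a b') * hqe
          have hDc : al * (dt a c * cr a c' - cr a c * dt a c')
              = -(dt a a) * cr a c' := by
            linear_combination (cr a c') * hpc - (dt a c') * hqe2
          have hDbpos : 0 < dt a b * cr a b' - cr a b * dt a b' := by
            rcases lt_or_ge 0 (dt a b * cr a b' - cr a b * dt a b') with h | h
            · exact h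
            · exfalso; nlinarith [mul_pos hA (neg_pos.mpr hcb'neg)]
          have hDcpos : 0 < dt a c * cr a c' - cr a c * dt a c' := by
            rcases lt_or_ge 0 (dt a c * cr a c' - cr a c * dt a c') with h | h
            · exact h
            · exfalso; nlinarith [mul_pos hA (neg_pos.mpr hcc'neg)]
          by_cases hP1 : -cr a c' * dt a b + cr a b * dt a c' ≤ 0
          · refine ⟨b, c', Or.inl rfl, Or.inr rfl, ?_⟩
            refine mem_hull3
              (s := -(-cr a c' * dt a b + cr a b * dt a c') / dt a a)
              (t := -cr a c') (u := cr a b)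
              (div_nonneg (by linarith) hA.le) (by linarith) (by linarith)
              (by
                have := div_nonneg
                  (by linarith : (0:ℝ) ≤ -(-cr a c' * dt a b + cr a b * dt a c')) hA.le
                linarith) ?_
            apply eq_of_dc ha
            · rw [dt_comb3, dt_zero]
              have hdiv : -(-cr a c' * dt a b + cr a b * dt a c') / dt a a * dt a a
                  = -(-cr a c' * dt a b + cr a b * dt a c') :=
                div_mul_cancel₀ _ hA.ne'
              linarith
            · rw [cr_comb3, cr_self, cr_zero]
              ring
          · push_neg at hP1
            by_cases hP2 : -cr a b' * dt a c + cr a c * dt a b' ≤ 0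
            · refine ⟨b', c, Or.inr rfl, Or.inl rfl, ?_⟩
              refine mem_hull3
                (s := -(-cr a b' * dt a c + cr a c * dt a b') / dt a a)
                (t := cr a c) (u := -cr a b')
                (div_nonneg (by linarith) hA.le) (by linarith) (by linarith)
                (by
                  have := div_nonneg
                    (by linarith : (0:ℝ) ≤ -(-cr a b' * dt a c + cr a c * dt a b')) hA.le
                  linarith) ?_
              apply eq_of_dc ha
              · rw [dt_comb3, dt_zero]
                have hdiv : -(-cr a b' * dt a c + cr a c * dt a b') / dt a a * dt a a
                    = -(-cr a b' * dt a c + cr a c * dt a b') :=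
                  div_mul_cancel₀ _ hA.ne'
                linarith
              · rw [cr_comb3, cr_self, cr_zero]
                ring
            · push_neg at hP2
              exfalso
              have k1 : 0 < dt a b' / cr a b' - dt a b / cr a b := by
                have e : dt a b' / cr a b' - dt a b / cr a b
                    = (dt a b * cr a b' - cr a b * dt a b')
                      / (cr a b * -cr a b') := by
                  field_simp
                  ring
                rw [e]
                exact div_pos hDbpos (mul_pos hcbpos (by linarith))
              have k2 : 0 < dt a c' / cr a c' - dt a c / cr a c := by
                have e : dt a c' / cr a c' - dt a c / cr a c
                    = (dt a c * cr a c' - cr a c * dt a c')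
                      / (cr a c * -cr a c') := by
                  field_simp
                  ring
                rw [e]
                exact div_pos hDcpos (mul_pos hccpos (by linarith))
              have k3 : 0 < dt a b / cr a b - dt a c' / cr a c' := by
                have e : dt a b / cr a b - dt a c' / cr a c'
                    = (-cr a c' * dt a b + cr a b * dt a c')
                      / (cr a b * -cr a c') := by
                  field_simp
                  ring
                rw [e]
                exact div_pos hP1 (mul_pos hcbpos (by linarith))
              have k4 : 0 < dt a c / cr a c - dt a b' / cr a b' := by
                have e : dt a c / cr a c - dt a b' / cr a b'
                    = (-cr a b' * dt a c + cr a c * dt a b')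
                      / (cr a c * -cr a b') := by
                  field_simp
                  ring
                rw [e]
                exact div_pos hP2 (mul_pos hccpos (by linarith))
              linarith

end CC

theorem colorful_caratheodory_plane (M₁ M₂ M₃ : Finset (Fin 2 → ℝ))
    (h₁ : (0 : Fin 2 → ℝ) ∈ convexHull ℝ (↑M₁ : Set (Fin 2 → ℝ)))
    (h₂ : (0 : Fin 2 → ℝ) ∈ convexHull ℝ (↑M₂ : Set (Fin 2 → ℝ)))
    (h₃ : (0 : Fin 2 → ℝ) ∈ convexHull ℝ (↑M₃ : Set (Fin 2 → ℝ))) :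
    ∃ m₁ ∈ M₁, ∃ m₂ ∈ M₂, ∃ m₃ ∈ M₃,
      (0 : Fin 2 → ℝ) ∈ convexHull ℝ ({m₁, m₂, m₃} : Set (Fin 2 → ℝ)) := by
  classical
  obtain ⟨e1, he1⟩ := CC.hull_ne h₁
  obtain ⟨e2, he2⟩ := CC.hull_ne h₂
  obtain ⟨e3, he3⟩ := CC.hull_ne h₃
  by_cases h0 : ∃ a ∈ M₁, a ≠ (0 : Fin 2 → ℝ)
  · obtain ⟨a, haM, ha⟩ := h0
    rcases CC.cone_pair M₂ h₂ a ha with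
      ⟨x, hx, y, hy, s, t, hs, ht, hxy⟩ | ⟨b, hb, b', hb', l, m, hl, hm, heq, hqb, hqb'⟩
    · obtain ⟨n, hn, p, hp, q, hq, hmem⟩ := CC.pair_case M₁ M₃ h₁ h₃ x y s t hs ht hxy
      have hqM : q ∈ M₂ := by rcases hq with rfl | rfl; exacts [hx, hy]
      exact ⟨n, hn, q, hqM, p, hp, hmem⟩
    · rcases CC.cone_pair M₃ h₃ a ha with
        ⟨x, hx, y, hy, s, t, hs, ht, hxy⟩ | ⟨c, hc, c', hc', al, be, hal, hbe, heq2, hqc, hqc'⟩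
      · obtain ⟨n, hn, p, hp, q, hq, hmem⟩ := CC.pair_case M₁ M₂ h₁ h₂ x y s t hs ht hxy
        have hqM : q ∈ M₃ := by rcases hq with rfl | rfl; exacts [hx, hy]
        refine ⟨n, hn, p, hp, q, hqM, ?_⟩
        rwa [show ({n, p, q} : Set (Fin 2 → ℝ)) = {n, q, p} by rw [Set.pair_comm p q]]
      · obtain ⟨yv, zv, hyv, hzv, hmem⟩ :=
          CC.combine a b b' c c' ha l m hl hm heq hqb hqb' al be hal hbe heq2 hqc hqc'
        have hyM : yv ∈ M₂ := by rcases hyv with rfl | rfl; exacts [hb, hb']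
        have hzM : zv ∈ M₃ := by rcases hzv with rfl | rfl; exacts [hc, hc']
        exact ⟨a, haM, yv, hyM, zv, hzM, hmem⟩
  · push_neg at h0
    refine ⟨e1, he1, e2, he2, e3, he3, ?_⟩
    apply subset_convexHull
    rw [← h0 e1 he1]
    exact Set.mem_insert _ _
end

section
/- For every integer r ≥ 1, any 2r−1 real numbers can be partitioned into r pairwise disjoint sets A₁, …, A_r such that the intervals [min Aⱼ, max Aⱼ] (the convex hulls of the Aⱼ in ℝ) have a common point. -/
theorem tverberg_dim_one (r : ℕ) (hr : 1 ≤ r) (p : Fin (2 * r - 1) → ℝ) :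
    ∃ A : Fin r → Finset (Fin (2 * r - 1)),
      (∀ j k, j ≠ k → Disjoint (A j) (A k)) ∧
      (Finset.univ.biUnion A = Finset.univ) ∧
      ∃ x : ℝ, ∀ j, x ∈ convexHull ℝ (p '' ↑(A j)) := by
  have hrn : r - 1 < 2 * r - 1 := by omega
  obtain ⟨σ, hmono⟩ : ∃ σ : Equiv.Perm (Fin (2 * r - 1)), Monotone (p ∘ σ) :=
    ⟨Tuple.sort p, Tuple.monotone_sort p⟩
  have hb1 : ∀ j : Fin r, (j : ℕ) - 1 < 2 * r - 1 := fun j => by have := j.isLt; omega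
  have hb2 : ∀ j : Fin r, r - 1 + (j : ℕ) < 2 * r - 1 := fun j => by have := j.isLt; omega
  have key : ∀ x y, σ x = σ y → (x : ℕ) = (y : ℕ) := fun x y h =>
    congrArg Fin.val (σ.injective h)
  refine ⟨fun j => if (j : ℕ) = 0 then {σ ⟨r - 1, hrn⟩}
      else {σ ⟨(j : ℕ) - 1, hb1 j⟩, σ ⟨r - 1 + (j : ℕ), hb2 j⟩}, ?_, ?_, ?_⟩
  · intro j k hjk
    have hjk' : (j : ℕ) ≠ (k : ℕ) := fun h => hjk (Fin.ext h)
    have hj' := j.isLt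
    have hk' := k.isLt
    rw [Finset.disjoint_left]
    intro a ha hb
    dsimp only at ha hb
    by_cases hj : (j : ℕ) = 0 <;> by_cases hk : (k : ℕ) = 0
    · omega
    · rw [if_pos hj, Finset.mem_singleton] at ha
      rw [if_neg hk, Finset.mem_insert, Finset.mem_singleton] at hb
      rcases hb with hb | hb <;> · have := key _ _ (ha ▸ hb.symm); simp at this; omega
    · rw [if_neg hj, Finset.mem_insert, Finset.mem_singleton] at ha
      rw [if_pos hk, Finset.mem_singleton] at hb
      rcases ha with ha | ha <;> · have := key _ _ (hb ▸ ha.symm); simp at this; omega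
    · rw [if_neg hj, Finset.mem_insert, Finset.mem_singleton] at ha
      rw [if_neg hk, Finset.mem_insert, Finset.mem_singleton] at hb
      rcases ha with ha | ha <;> rcases hb with hb | hb <;>
        · have := key _ _ (ha ▸ hb.symm); simp at this; omega
  · apply Finset.eq_univ_iff_forall.mpr
    intro i
    simp only [Finset.mem_biUnion, Finset.mem_univ, true_and]
    obtain ⟨k, hki⟩ : ∃ k, σ k = i := ⟨σ.symm i, σ.apply_symm_apply i⟩
    have hkl := k.isLt
    rcases lt_trichotomy (k : ℕ) (r - 1) with h | h | h
    · refine ⟨⟨(k : ℕ) + 1, by omega⟩, ?_⟩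
      rw [if_neg (by simp), Finset.mem_insert]
      left; rw [← hki]
      exact congrArg σ (Fin.ext (by simp only [Fin.val_mk]; omega))
    · refine ⟨⟨0, by omega⟩, ?_⟩
      rw [if_pos rfl, Finset.mem_singleton, ← hki]
      exact congrArg σ (Fin.ext (by simp only [Fin.val_mk]; omega))
    · refine ⟨⟨(k : ℕ) - (r - 1), by omega⟩, ?_⟩
      rw [if_neg (by simp only [Fin.val_mk]; omega), Finset.mem_insert, Finset.mem_singleton]
      right; rw [← hki]
      exact congrArg σ (Fin.ext (by simp only [Fin.val_mk]; omega))
  · refine ⟨p (σ ⟨r - 1, hrn⟩), fun j => ?_⟩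
    dsimp only
    by_cases hj : (j : ℕ) = 0
    · rw [if_pos hj]
      simp only [Finset.coe_singleton, Set.image_singleton]
      exact subset_convexHull ℝ _ (Set.mem_singleton _)
    · rw [if_neg hj]
      have him : p '' ↑({σ ⟨(j : ℕ) - 1, hb1 j⟩, σ ⟨r - 1 + (j : ℕ), hb2 j⟩} :
          Finset (Fin (2 * r - 1))) =
          {p (σ ⟨(j : ℕ) - 1, hb1 j⟩), p (σ ⟨r - 1 + (j : ℕ), hb2 j⟩)} := by
        simp [Set.image_insert_eq]
      rw [him, convexHull_pair]
      have h1 : p (σ ⟨(j : ℕ) - 1, hb1 j⟩) ≤ p (σ ⟨r - 1, hrn⟩) :=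
        hmono (by simp only [Fin.mk_le_mk]; omega)
      have h2 : p (σ ⟨r - 1, hrn⟩) ≤ p (σ ⟨r - 1 + (j : ℕ), hb2 j⟩) :=
        hmono (by simp only [Fin.mk_le_mk]; omega)
      rw [segment_eq_Icc (h1.trans h2)]
      exact ⟨h1, h2⟩
end
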